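/- Let r, λ̃, p be positive integers, λ = r·λ̃ − r + 1, m = λ·p. Let v ∈ ℝ^λ be the condensation vector of order r, V = I_p ⊗ v ∈ ℝ^{p×m} the condensation operator, and P ∈ ℝ^{m×m} the first-order difference matrix. Then ‖V·P^r‖_{∞,∞} ≤ r·2^{3r−1}. -/

import Mathlib

open MeasureTheory ProbabilityTheory Real
open scoped NNReal ENNReal

noncomputable section

/-- Matrix–vector product for matrices represented as functions. -/
def matVec {a b : ℕ} (M : Fin a → Fin b → ℝ) (x : Fin b → ℝ) : Fin a → ℝ :=
  fun i => ∑ j, M i j * x j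

/-- Matrix–matrix product for matrices represented as functions. -/
def matMul {a b c : ℕ} (M : Fin a → Fin b → ℝ) (N : Fin b → Fin c → ℝ) :
    Fin a → Fin c → ℝ :=
  fun i k => ∑ j, M i j * N j k

/-- Powers of a square matrix represented as a function. -/
def matPow {a : ℕ} (M : Fin a → Fin a → ℝ) : ℕ → (Fin a → Fin a → ℝ)
  | 0 => fun i j => if i = j then 1 else 0
  | k + 1 => matMul (matPow M k) M

/-- The ℓ¹ norm on ℝ^k. -/
def l1Norm {k : ℕ} (x : Fin k → ℝ) : ℝ := ∑ i, |x i|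

/-- The ℓ² norm on ℝ^k. -/
def l2Norm {k : ℕ} (x : Fin k → ℝ) : ℝ := Real.sqrt (∑ i, (x i) ^ 2)

/-- The ℓ^∞ norm on ℝ^k. -/
def lInfNorm {k : ℕ} (x : Fin k → ℝ) : ℝ := ⨆ i, |x i|

/-- The (∞,1) operator norm: `max_{x ≠ 0} ‖Kx‖₁ / ‖x‖_∞`. -/
def opNormInfOne {a b : ℕ} (K : Fin a → Fin b → ℝ) : ℝ :=
  sSup {t : ℝ | ∃ x : Fin b → ℝ, x ≠ 0 ∧ t = l1Norm (matVec K x) / lInfNorm x}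

/-- The (∞,∞) operator norm: `max_{x ≠ 0} ‖Kx‖_∞ / ‖x‖_∞`. -/
def opNormInfInf {a b : ℕ} (K : Fin a → Fin b → ℝ) : ℝ :=
  sSup {t : ℝ | ∃ x : Fin b → ℝ, x ≠ 0 ∧ t = lInfNorm (matVec K x) / lInfNorm x}

/-- The law `(1-s)·δ₀ + s·N(0,1/s)` of a single entry of a sparse Gaussian random matrix. -/
def sparseGaussianLaw (s : ℝ) : Measure ℝ :=
  (Real.toNNReal (1 - s)) • Measure.dirac (0 : ℝ) +
    (Real.toNNReal s) • gaussianReal 0 (Real.toNNReal s)⁻¹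

/-- The law of a sparse Gaussian random matrix with i.i.d. entries of law
`(1-s)·δ₀ + s·N(0,1/s)`. -/
def sparseGaussianMatrixLaw (m n : ℕ) (s : ℝ) : Measure (Fin m → Fin n → ℝ) :=
  Measure.pi fun _ : Fin m => Measure.pi fun _ : Fin n => sparseGaussianLaw s

/-- The uniform law on `{-1, 1}`. -/
def signLaw : Measure ℝ :=
  ((2 : ℝ≥0)⁻¹) • Measure.dirac (1 : ℝ) + ((2 : ℝ≥0)⁻¹) • Measure.dirac (-1 : ℝ)

/-- The law of a vector of i.i.d. uniform ±1 signs. -/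
def signVecLaw (n : ℕ) : Measure (Fin n → ℝ) := Measure.pi fun _ : Fin n => signLaw

/-- Bitwise dot product of the binary representations of two natural numbers. -/
def bitDot (i j : ℕ) : ℕ :=
  ∑ k ∈ Finset.range i.size, if i.testBit k && j.testBit k then 1 else 0

/-- The normalized Walsh–Hadamard matrix `H_{ij} = n^{-1/2} (-1)^{⟨i,j⟩}` (0-indexed). -/
def walshHadamard (n : ℕ) : Fin n → Fin n → ℝ :=
  fun i j => (Real.sqrt n)⁻¹ * (-1 : ℝ) ^ bitDot (i : ℕ) (j : ℕ)

/-- The fast Johnson–Lindenstrauss transform `Φ = A·H·D` where `D = diag d`. -/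
def fjlt {m n : ℕ} (A : Fin m → Fin n → ℝ) (d : Fin n → ℝ) : Fin m → Fin n → ℝ :=
  matMul A (matMul (walshHadamard n) (fun i j => if i = j then d i else 0))

/-- The coefficient of `z^j` in `(1 + z + ⋯ + z^{lt-1})^r`. -/
def condCoeff (r lt : ℕ) (j : ℕ) : ℝ :=
  ((∑ i ∈ Finset.range lt, (Polynomial.X : Polynomial ℝ) ^ i) ^ r).coeff j

/-- The condensation vector `v ∈ ℝ^λ` of order `r`. -/
def condVec (r lt lam : ℕ) : Fin lam → ℝ := fun j => condCoeff r lt (j : ℕ)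

/-- The block matrix `I_p ⊗ v ∈ ℝ^{p × (λp)}` built from a row vector `v ∈ ℝ^λ`. -/
def kronRow {lam p : ℕ} (v : Fin lam → ℝ) (i : Fin p) (c : Fin (lam * p)) : ℝ :=
  if (c : ℕ) / lam = (i : ℕ) then
    v ⟨(c : ℕ) % lam, Nat.mod_lt _ (Nat.pos_of_ne_zero fun h => absurd c.isLt (by simp [h]))⟩
  else 0

/-- The condensation operator `V = I_p ⊗ v`. -/
def condOp (r lt lam p : ℕ) : Fin p → Fin (lam * p) → ℝ :=
  kronRow (condVec r lt lam)

/-- The normalized condensation operator `Ṽ = (√(π/2)/(p‖v‖₂)) V`. -/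
def normCondOp (r lt lam p : ℕ) : Fin p → Fin (lam * p) → ℝ :=
  fun i c => (Real.sqrt (Real.pi / 2) / ((p : ℝ) * l2Norm (condVec r lt lam))) *
    condOp r lt lam p i c

/-- The first-order difference matrix `P`. -/
def diffMat (m : ℕ) : Fin m → Fin m → ℝ :=
  fun i j => if (i : ℕ) = (j : ℕ) then 1 else if (i : ℕ) = (j : ℕ) + 1 then -1 else 0

/-- Pairing `(i, k) ↦ i·λ + k` as an index into `Fin (λ·p)`. -/
def finPair {p lam : ℕ} (i : Fin p) (k : Fin lam) : Fin (lam * p) :=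
  ⟨(i : ℕ) * lam + (k : ℕ), by
    calc (i : ℕ) * lam + (k : ℕ) < (i : ℕ) * lam + lam := Nat.add_lt_add_left k.isLt _
      _ = ((i : ℕ) + 1) * lam := by ring
      _ ≤ p * lam := Nat.mul_le_mul_right lam i.isLt
      _ = lam * p := Nat.mul_comm p lam⟩

/-- The Kronecker product `v^T ⊗ y ∈ ℝ^{λn}`, whose `(k·n + j)`-th entry is `v_k · y_j`. -/
def kronVec {lam n : ℕ} (v : Fin lam → ℝ) (y : Fin n → ℝ) : Fin (lam * n) → ℝ :=
  fun c =>
    have hn : 0 < n := Nat.pos_of_ne_zero fun h => absurd c.isLt (by simp [h])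
    v ⟨(c : ℕ) / n, (Nat.div_lt_iff_lt_mul hn).mpr c.isLt⟩ * y ⟨(c : ℕ) % n, Nat.mod_lt _ hn⟩

/-- Reshaping of an `(λp) × n` matrix into a `p × (λn)` matrix, with
`B_{i, k·n + j} = A_{i·λ + k, j}`. -/
def reshapeMat {lam p n : ℕ} (A : Fin (lam * p) → Fin n → ℝ) :
    Fin p → Fin (lam * n) → ℝ :=
  fun i c =>
    have hn : 0 < n := Nat.pos_of_ne_zero fun h => absurd c.isLt (by simp [h])
    A (finPair i ⟨(c : ℕ) / n, (Nat.div_lt_iff_lt_mul hn).mpr c.isLt⟩)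
      ⟨(c : ℕ) % n, Nat.mod_lt _ hn⟩

/-- The support `n_j = σ·j² + 1` (zero-indexed `j`, i.e. `σ(j-1)²+1` one-indexed). -/
def sigmaDeltaIdx (σ : ℕ) {r : ℕ} (j : Fin r) : ℕ := σ * (j : ℕ) ^ 2 + 1

/-- The filter coefficient `d_j = ∏_{i ≠ j} n_i / (n_i - n_j)`. -/
def sigmaDeltaCoef (σ : ℕ) {r : ℕ} (j : Fin r) : ℝ :=
  ∏ i ∈ Finset.univ.erase j,
    (sigmaDeltaIdx σ i : ℝ) / ((sigmaDeltaIdx σ i : ℝ) - (sigmaDeltaIdx σ j : ℝ))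

end

/-!
Multiplying a row vector by `P` on the right maps `u` to `c ↦ u c - u (c + 1)`. Reading the
entries of a row backwards as coefficients of a polynomial, this is multiplication by `1 - X`.
Row `i` of `V` holds the coefficients of `g ^ r`, `g = 1 + X + ⋯ + X ^ (λ̃ - 1)`, a palindrome of
degree `λ - 1`, so row `i` of `V P ^ r` holds, backwards, the coefficients of
`(1 - X) ^ r g ^ r = (1 - X ^ λ̃) ^ r`, whose absolute values sum to at most `2 ^ r`. Every row of
`V P ^ r` therefore has `ℓ¹`-norm at most `2 ^ r ≤ r 2 ^ (3r - 1)`.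
-/

open Polynomial Finset

section Palindrome

variable {R : Type*} [Semiring R]

lemma coeff_geom_sum_X (n k : ℕ) :
    (∑ i ∈ range n, (X : R[X]) ^ i).coeff k = if k < n then 1 else 0 := by
  simp [coeff_X_pow]

lemma natDegree_geom_sum_X_le (n : ℕ) : (∑ i ∈ range n, (X : R[X]) ^ i).natDegree ≤ n - 1 :=
  natDegree_sum_le_of_forall_le _ _ fun i hi =>
    natDegree_X_pow_le i |>.trans (Nat.le_sub_one_of_lt (mem_range.mp hi))

lemma natDegree_geom_sum_X_pow_le (n r : ℕ) :
    ((∑ i ∈ range n, (X : R[X]) ^ i) ^ r).natDegree ≤ r * (n - 1) :=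
  natDegree_pow_le.trans (Nat.mul_le_mul_left r (natDegree_geom_sum_X_le n))

lemma reflect_geom_sum_X (n : ℕ) :
    reflect (n - 1) (∑ i ∈ range n, (X : R[X]) ^ i) = ∑ i ∈ range n, (X : R[X]) ^ i := by
  ext k
  rw [coeff_reflect, coeff_geom_sum_X, coeff_geom_sum_X]
  rcases le_or_gt k (n - 1) with hk | hk
  · rw [revAt_le hk]
    simp only [show n - 1 - k < n ↔ k < n by omega]
  · rw [revAt_eq_self_of_lt hk]

lemma reflect_geom_sum_X_pow (n r : ℕ) :
    reflect (r * (n - 1)) ((∑ i ∈ range n, (X : R[X]) ^ i) ^ r) =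
      (∑ i ∈ range n, (X : R[X]) ^ i) ^ r := by
  induction r with
  | zero => simp
  | succ r ih =>
    rw [pow_succ, add_one_mul,
      reflect_mul _ _ (natDegree_geom_sum_X_pow_le n r) (natDegree_geom_sum_X_le n), ih,
      reflect_geom_sum_X]

end Palindrome

section RevCoeff

variable {R : Type*} [Ring R]

def revCoeff (B : ℕ) (G : R[X]) (N : ℕ) : R := if N ≤ B then G.coeff (B - N) else 0

lemma revCoeff_sub_revCoeff_succ (B : ℕ) (G : R[X]) (N : ℕ) :
    revCoeff B G N - revCoeff B G (N + 1) = revCoeff B ((1 - X) * G) N := by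
  simp only [revCoeff, sub_mul, one_mul, coeff_sub]
  rcases lt_trichotomy N B with hN | rfl | hN
  · obtain ⟨k, hk⟩ : ∃ k, B - N = k + 1 := ⟨B - N - 1, by omega⟩
    rw [if_pos hN.le, if_pos (Nat.succ_le_of_lt hN), if_pos hN.le, hk, coeff_X_mul,
      show B - (N + 1) = k by omega]
  · simp
  · simp [hN.not_ge, (hN.trans (Nat.lt_succ_self N)).not_ge]

end RevCoeff

lemma kronRow_coeff_of_reflect_eq {D p : ℕ} {Q : ℝ[X]} (hdeg : Q.natDegree ≤ D)
    (hQ : reflect D Q = Q) (i : Fin p) (c : Fin ((D + 1) * p)) :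
    kronRow (fun k : Fin (D + 1) => Q.coeff k) i c = revCoeff (i * (D + 1) + D) Q c := by
  have hD : 0 < D + 1 := by omega
  have hlt : (c : ℕ) / (D + 1) < i + 1 ↔ (c : ℕ) < i * (D + 1) + (D + 1) := by
    rw [← add_one_mul]
    exact Nat.div_lt_iff_lt_mul hD
  have hge : (i : ℕ) ≤ (c : ℕ) / (D + 1) ↔ (i : ℕ) * (D + 1) ≤ c := Nat.le_div_iff_mul_le hD
  have hmod := Nat.div_add_mod' (c : ℕ) (D + 1)
  simp only [kronRow, revCoeff]
  by_cases hdiv : (c : ℕ) / (D + 1) = i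
  · rw [if_pos hdiv, if_pos (by omega)]
    rw [hdiv] at hmod
    conv_lhs => rw [← hQ, coeff_reflect, revAt_le (Nat.lt_add_one_iff.mp (Nat.mod_lt _ hD))]
    congr 1
    omega
  · rw [if_neg hdiv]
    split_ifs with hc
    · have : (c : ℕ) < i * (D + 1) := by omega
      exact (coeff_eq_zero_of_natDegree_lt (by omega)).symm
    · rfl

lemma sum_range_abs_coeff_X_mul_le (q : ℝ[X]) (M : ℕ) :
    ∑ N ∈ range M, |(X * q).coeff N| ≤ ∑ N ∈ range M, |q.coeff N| := by
  cases M with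
  | zero => simp
  | succ M =>
    rw [sum_range_succ', sum_range_succ]
    simp only [coeff_X_mul, coeff_X_mul_zero, abs_zero, add_zero]
    exact le_add_of_nonneg_right (abs_nonneg _)

lemma sum_range_abs_coeff_X_pow_mul_le (q : ℝ[X]) (k M : ℕ) :
    ∑ N ∈ range M, |(X ^ k * q).coeff N| ≤ ∑ N ∈ range M, |q.coeff N| := by
  induction k with
  | zero => simp
  | succ k ih =>
    rw [pow_succ', mul_assoc]
    exact (sum_range_abs_coeff_X_mul_le _ M).trans ih

lemma sum_range_abs_coeff_one_sub_X_pow_mul_le (q : ℝ[X]) (k M : ℕ) :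
    ∑ N ∈ range M, |((1 - X ^ k) * q).coeff N| ≤ 2 * ∑ N ∈ range M, |q.coeff N| := by
  calc ∑ N ∈ range M, |((1 - X ^ k) * q).coeff N|
      ≤ ∑ N ∈ range M, (|q.coeff N| + |(X ^ k * q).coeff N|) := by
        gcongr with N
        rw [sub_mul, one_mul, coeff_sub]
        exact abs_sub _ _
    _ ≤ 2 * ∑ N ∈ range M, |q.coeff N| := by
        rw [sum_add_distrib, two_mul]
        exact (add_le_add_iff_left _).mpr (sum_range_abs_coeff_X_pow_mul_le q k M)

lemma sum_range_abs_coeff_one_sub_X_pow_pow_le (k r M : ℕ) :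
    ∑ N ∈ range M, |((1 - X ^ k : ℝ[X]) ^ r).coeff N| ≤ 2 ^ r := by
  induction r with
  | zero =>
    cases M with
    | zero => simp
    | succ M => simp [sum_range_succ', coeff_one]
  | succ r ih =>
    rw [pow_succ', pow_succ]
    exact (sum_range_abs_coeff_one_sub_X_pow_mul_le _ k M).trans (by linarith)

lemma matMul_assoc {a b c d : ℕ} (A : Fin a → Fin b → ℝ) (B : Fin b → Fin c → ℝ)
    (C : Fin c → Fin d → ℝ) : matMul (matMul A B) C = matMul A (matMul B C) := by
  funext i k
  simp only [matMul, sum_mul, mul_sum]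
  rw [sum_comm]
  exact sum_congr rfl fun _ _ => sum_congr rfl fun _ _ => mul_assoc _ _ _

lemma sum_mul_diffMat {m : ℕ} (u : ℕ → ℝ) (hu : u m = 0) (c : Fin m) :
    ∑ j : Fin m, u j * diffMat m j c = u c - u (c + 1) := by
  have hsplit : ∀ j : Fin m, u j * diffMat m j c =
      (if j = c then u j else 0) - (if (j : ℕ) = c + 1 then u (c + 1) else 0) := fun j => by
    simp only [diffMat, Fin.ext_iff]
    split_ifs <;> first | (exfalso; omega) | simp_all
  rw [sum_congr rfl fun j _ => hsplit j, sum_sub_distrib, sum_ite_eq',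
    Fin.sum_univ_eq_sum_range (fun j => if j = (c : ℕ) + 1 then u (c + 1) else 0), sum_ite_eq']
  simp only [mem_univ, if_true, mem_range, sub_right_inj]
  split_ifs with hc
  · rfl
  · rw [show (c : ℕ) + 1 = m by omega, hu]

lemma matMul_diffMat_pow_row {k m : ℕ} (A : Fin k → Fin m → ℝ) (i : Fin k) {B : ℕ} (hB : B < m)
    {G : ℝ[X]} (hA : ∀ c : Fin m, A i c = revCoeff B G c) (n : ℕ) (c : Fin m) :
    matMul A (matPow (diffMat m) n) i c = revCoeff B ((1 - X) ^ n * G) c := by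
  induction n generalizing c with
  | zero => simp [matMul, matPow, hA]
  | succ n ih =>
    have hzero : revCoeff B ((1 - X) ^ n * G) m = 0 := if_neg hB.not_ge
    rw [matPow, ← matMul_assoc]
    change ∑ j, matMul A (matPow (diffMat m) n) i j * diffMat m j c = _
    simp only [ih]
    rw [sum_mul_diffMat (revCoeff B ((1 - X) ^ n * G)) hzero, revCoeff_sub_revCoeff_succ,
      pow_succ', mul_assoc]

lemma sum_abs_revCoeff {m B : ℕ} (hB : B < m) (G : ℝ[X]) :
    ∑ c : Fin m, |revCoeff B G c| = ∑ N ∈ range (B + 1), |G.coeff N| := by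
  rw [Fin.sum_univ_eq_sum_range (fun c => |revCoeff B G c|),
    ← sum_range_add_sum_Ico _ (show B + 1 ≤ m from hB),
    sum_eq_zero (s := Ico _ _) fun c hc => by
      rw [revCoeff, if_neg (by simp at hc; omega), abs_zero], add_zero, ← sum_range_reflect]
  refine sum_congr rfl fun N hN => ?_
  rw [revCoeff, if_pos (by simp at hN; omega)]
  congr 3
  simp at hN
  omega

section LInfNorm

variable {a b : ℕ}

lemma abs_le_lInfNorm (x : Fin b → ℝ) (j : Fin b) : |x j| ≤ lInfNorm x :=
  le_ciSup (f := fun j => |x j|) (Set.finite_range _).bddAbove j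

lemma lInfNorm_pos {x : Fin b → ℝ} (hx : x ≠ 0) : 0 < lInfNorm x := by
  obtain ⟨j, hj⟩ := Function.ne_iff.mp hx
  exact (abs_pos.mpr hj).trans_le (abs_le_lInfNorm x j)

lemma abs_matVec_le (K : Fin a → Fin b → ℝ) (x : Fin b → ℝ) (i : Fin a) :
    |matVec K x i| ≤ (∑ j, |K i j|) * lInfNorm x :=
  calc |∑ j, K i j * x j| ≤ ∑ j, |K i j * x j| := abs_sum_le_sum_abs _ _
    _ ≤ ∑ j, |K i j| * lInfNorm x := by
      gcongr with j
      rw [abs_mul]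
      exact mul_le_mul_of_nonneg_left (abs_le_lInfNorm x j) (abs_nonneg _)
    _ = (∑ j, |K i j|) * lInfNorm x := (sum_mul _ _ _).symm

lemma opNormInfInf_le_of_forall_sum_abs_le (K : Fin a → Fin b → ℝ) {C : ℝ} (hC : 0 ≤ C)
    (hK : ∀ i, ∑ j, |K i j| ≤ C) : opNormInfInf K ≤ C := by
  refine Real.sSup_le ?_ hC
  rintro _ ⟨x, hx, rfl⟩
  have hxpos := lInfNorm_pos hx
  rw [div_le_iff₀ hxpos]
  refine Real.iSup_le (fun i => ?_) (by positivity)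
  exact (abs_matVec_le K x i).trans (mul_le_mul_of_nonneg_right (hK i) hxpos.le)

end LInfNorm

lemma condOp_apply_eq_revCoeff (r lt p : ℕ) (i : Fin p) (c : Fin ((r * (lt - 1) + 1) * p)) :
    condOp r lt (r * (lt - 1) + 1) p i c =
      revCoeff (i * (r * (lt - 1) + 1) + r * (lt - 1)) ((∑ k ∈ range lt, (X : ℝ[X]) ^ k) ^ r) c :=
  kronRow_coeff_of_reflect_eq (natDegree_geom_sum_X_pow_le lt r) (reflect_geom_sum_X_pow lt r) i c

lemma sum_abs_condOp_mul_diffMat_pow_le (r lt p : ℕ) (i : Fin p) :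
    ∑ c, |matMul (condOp r lt (r * (lt - 1) + 1) p)
      (matPow (diffMat ((r * (lt - 1) + 1) * p)) r) i c| ≤ 2 ^ r := by
  set D := r * (lt - 1)
  have hB : (i : ℕ) * (D + 1) + D < (D + 1) * p := by nlinarith [i.isLt]
  rw [sum_congr rfl fun c _ => by
      rw [matMul_diffMat_pow_row _ i hB (condOp_apply_eq_revCoeff r lt p i) r c],
    sum_abs_revCoeff hB, ← mul_pow, mul_neg_geom_sum]
  exact sum_range_abs_coeff_one_sub_X_pow_pow_le lt r _

theorem condOp_diffPow_opNorm_le_general (r lt p : ℕ) (hr : 0 < r) (lam : ℕ)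
    (hlam : lam = r * lt - r + 1) :
    opNormInfInf (matMul (condOp r lt lam p) (matPow (diffMat (lam * p)) r)) ≤
      (r : ℝ) * 2 ^ (3 * r - 1) := by
  obtain rfl : lam = r * (lt - 1) + 1 := by rw [hlam, Nat.mul_sub_one]
  calc opNormInfInf _ ≤ 2 ^ r :=
        opNormInfInf_le_of_forall_sum_abs_le _ (by positivity)
          (sum_abs_condOp_mul_diffMat_pow_le r lt p)
    _ ≤ 2 ^ (3 * r - 1) := pow_le_pow_right₀ one_le_two (by omega)
    _ ≤ r * 2 ^ (3 * r - 1) := le_mul_of_one_le_left (by positivity) (by exact_mod_cast hr)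

/-- Bound on the (∞,∞) operator norm of `V·P^r`. -/
theorem condOp_diffPow_opNorm_le (r lt p : ℕ) (hr : 0 < r) (hlt : 0 < lt)
    (hp : 0 < p) (lam : ℕ) (hlam : lam = r * lt - r + 1) :
    opNormInfInf (matMul (condOp r lt lam p) (matPow (diffMat (lam * p)) r)) ≤
      (r : ℝ) * 2 ^ (3 * r - 1) :=
  condOp_diffPow_opNorm_le_general r lt p hr lam hlam
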